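/- For every integer s ≥ 2, every positive integer k, and every integer m ≥ s·k, Duplicator wins the game EHR[T_1^{(s,k,m)}, T_2^{(s,k,m)}, s-1, k]. -/

import Mathlib

/-! ## Rooted trees -/

/-- A rooted tree structure: a vertex type, a root, and a parent map
(`parent v = none` is intended to hold exactly when `v` is the root). -/
structure RTree where
  V : Type
  root : V
  parent : V → Option V

namespace RTree

/-- Iterate the parent map `n` times. -/
def parentIter (T : RTree) : ℕ → T.V → Option T.V
  | 0, v => some v
  | n + 1, v => (T.parent v).bind (T.parentIter n)

/-- `u` is a descendant of `v` (possibly `u = v`). -/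
def IsDesc (T : RTree) (v u : T.V) : Prop :=
  ∃ n, T.parentIter n u = some v

/-- The structure is a genuine rooted, locally finite tree:
exactly the root has no parent, every vertex reaches the root by iterating
the parent map (connectivity and acyclicity), and every vertex has finitely
many children (local finiteness). -/
def IsTree (T : RTree) : Prop :=
  (∀ v, T.parent v = none ↔ v = T.root) ∧
  (∀ v, ∃ n, T.parentIter n v = some T.root) ∧
  (∀ v, {u | T.parent u = some v}.Finite)

open Classical in
/-- The subtree `T(v)` consisting of `v` and all its descendants, rooted at `v`. -/
noncomputable def subtree (T : RTree) (v : T.V) : RTree where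
  V := {u : T.V // T.IsDesc v u}
  root := ⟨v, 0, rfl⟩
  parent u :=
    if u.1 = v then none
    else (T.parent u.1).bind fun w =>
      if h : T.IsDesc v w then some ⟨w, h⟩ else none

end RTree

/-- An isomorphism of rooted trees: a bijection of vertices mapping root to
root and commuting with the parent maps. -/
structure TreeIso (S T : RTree) where
  toEquiv : S.V ≃ T.V
  map_root : toEquiv S.root = T.root
  map_parent : ∀ v, (S.parent v).map toEquiv = T.parent (toEquiv v)

/-! ## First-order logic of rooted trees -/

/-- Terms: variables (de Bruijn indices) and the constant `R` for the root. -/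
inductive FOTerm where
  | var : ℕ → FOTerm
  | root : FOTerm
deriving DecidableEq

/-- First-order formulas in the language of rooted trees: equality `x = y`,
the parent relation `parentOf t t'` (meaning `π(t') = t`, i.e. `t` is the
parent of `t'`), Boolean connectives, and quantifiers (de Bruijn style). -/
inductive FOFormula where
  | eq : FOTerm → FOTerm → FOFormula
  | parentOf : FOTerm → FOTerm → FOFormula
  | not : FOFormula → FOFormula
  | and : FOFormula → FOFormula → FOFormula
  | or : FOFormula → FOFormula → FOFormula
  | imp : FOFormula → FOFormula → FOFormula
  | all : FOFormula → FOFormula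
  | ex : FOFormula → FOFormula
deriving DecidableEq

namespace FOTerm

def eval (T : RTree) (env : ℕ → T.V) : FOTerm → T.V
  | var n => env n
  | root => T.root

def freeBound : FOTerm → ℕ
  | var n => n + 1
  | root => 0

end FOTerm

/-- Kinds of quantifiers, used to count alternations. -/
inductive QKind where
  | ex | all
deriving DecidableEq

/-- The dual of a quantifier kind. -/
def QKind.dual : QKind → QKind
  | .ex => .all
  | .all => .ex

namespace FOFormula

/-- Satisfaction of a formula in a rooted tree under an environment. -/
def Sat (T : RTree) : FOFormula → (ℕ → T.V) → Prop
  | eq t₁ t₂, env => t₁.eval T env = t₂.eval T env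
  | parentOf t₁ t₂, env => T.parent (t₂.eval T env) = some (t₁.eval T env)
  | not φ, env => ¬ φ.Sat T env
  | and φ ψ, env => φ.Sat T env ∧ ψ.Sat T env
  | or φ ψ, env => φ.Sat T env ∨ ψ.Sat T env
  | imp φ ψ, env => φ.Sat T env → ψ.Sat T env
  | all φ, env => ∀ w : T.V, φ.Sat T (fun n => match n with | 0 => w | Nat.succ k => env k)
  | ex φ, env => ∃ w : T.V, φ.Sat T (fun n => match n with | 0 => w | Nat.succ k => env k)

/-- Quantifier depth: the maximum number of nested quantifiers. -/
def qd : FOFormula → ℕ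
  | eq _ _ => 0
  | parentOf _ _ => 0
  | not φ => φ.qd
  | and φ ψ => max φ.qd ψ.qd
  | or φ ψ => max φ.qd ψ.qd
  | imp φ ψ => max φ.qd ψ.qd
  | all φ => φ.qd + 1
  | ex φ => φ.qd + 1

/-- Auxiliary alternation count: `aqdAux φ pol q` is the maximum number of
alternations between (effectively) existential and universal quantifiers along
a nested quantifier sequence of `φ`, given the current polarity `pol`
(`true` = positive; negations and antecedents of implications flip it, so that
e.g. a `∀` under a negation counts as an `∃`) and the effective kind `q` of
the innermost enclosing quantifier (if any). -/
def aqdAux : FOFormula → Bool → Option QKind → ℕ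
  | eq _ _, _, _ => 0
  | parentOf _ _, _, _ => 0
  | not φ, pol, q => φ.aqdAux (!pol) q
  | and φ ψ, pol, q => max (φ.aqdAux pol q) (ψ.aqdAux pol q)
  | or φ ψ, pol, q => max (φ.aqdAux pol q) (ψ.aqdAux pol q)
  | imp φ ψ, pol, q => max (φ.aqdAux (!pol) q) (ψ.aqdAux pol q)
  | all φ, pol, q =>
      (if q = some (if pol then QKind.ex else QKind.all) then 1 else 0) +
        φ.aqdAux pol (some (if pol then QKind.all else QKind.ex))
  | ex φ, pol, q =>
      (if q = some (if pol then QKind.all else QKind.ex) then 1 else 0) +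
        φ.aqdAux pol (some (if pol then QKind.ex else QKind.all))

/-- The number of alternations of quantifiers of a formula: the maximum number
of switches between (effectively) existential and universal quantifiers in a
nested quantifier sequence.  Purely existential or purely universal formulas
have `aqd = 0`. -/
def aqd (φ : FOFormula) : ℕ := φ.aqdAux true none

/-- A bound on the free variables of a formula: all free de Bruijn indices
are `< freeBound`. -/
def freeBound : FOFormula → ℕ
  | eq t₁ t₂ => max t₁.freeBound t₂.freeBound
  | parentOf t₁ t₂ => max t₁.freeBound t₂.freeBound
  | not φ => φ.freeBound
  | and φ ψ => max φ.freeBound ψ.freeBound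
  | or φ ψ => max φ.freeBound ψ.freeBound
  | imp φ ψ => max φ.freeBound ψ.freeBound
  | all φ => φ.freeBound - 1
  | ex φ => φ.freeBound - 1

/-- A sentence is a formula with no free variables. -/
def IsSentence (φ : FOFormula) : Prop := φ.freeBound = 0

end FOFormula

/-- A (closed) formula holds in a rooted tree. -/
def Models (T : RTree) (φ : FOFormula) : Prop :=
  φ.Sat T (fun _ => T.root)

/-- The formula `P_i(x)`, with free variable `x` being de Bruijn index `0`:
`P_0(x) = ∀ y ¬(π(y) = x)` and `P_{i+1}(x) = ∀ y (π(y) = x → ¬ P_i(y))`. -/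
def Pform : ℕ → FOFormula
  | 0 => .all (.not (.parentOf (.var 1) (.var 0)))
  | i + 1 => .all (.imp (.parentOf (.var 1) (.var 0)) (.not (Pform i)))

/-- The sentence `KEIN_i = P_i(R)`. -/
def KEIN : ℕ → FOFormula
  | 0 => .all (.not (.parentOf .root (.var 0)))
  | i + 1 => .all (.imp (.parentOf .root (.var 0)) (.not (Pform i)))

/-! ## Ehrenfeucht games -/

/-- The winning condition for Duplicator: for all pairs `(x_i, y_i)`, `(x_j, y_j)`
in the list of selected/designated pairs, (Main 1) `π(x_j) = x_i ↔ π(y_j) = y_i`,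
and (Main 2) `x_i = x_j ↔ y_i = y_j`. -/
def GoodPairs (T₁ T₂ : RTree) (ps : List (T₁.V × T₂.V)) : Prop :=
  ∀ p ∈ ps, ∀ q ∈ ps,
    (T₁.parent p.1 = some q.1 ↔ T₂.parent p.2 = some q.2) ∧
    (p.1 = q.1 ↔ p.2 = q.2)

/-- Duplicator wins the scheduled Ehrenfeucht game on `T₁, T₂` in which Spoiler
must play his moves in consecutive batches, the batch sizes given by the list
`sched`, switching trees after each batch; `side = true` means Spoiler currently
plays on `T₁` (Duplicator answering on `T₂`), `side = false` means Spoiler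
currently plays on `T₂`.  The list `ps` records the pairs selected so far
(including designated pairs and the pair of roots); Duplicator wins when the
final configuration satisfies `GoodPairs`. -/
def DupWinsSched (T₁ T₂ : RTree) : List ℕ → Bool → List (T₁.V × T₂.V) → Prop
  | [], _, ps => GoodPairs T₁ T₂ ps
  | 0 :: rest, side, ps => DupWinsSched T₁ T₂ rest (!side) ps
  | (n + 1) :: rest, side, ps =>
      if side then
        ∀ x : T₁.V, ∃ y : T₂.V, DupWinsSched T₁ T₂ (n :: rest) side ((x, y) :: ps)
      else
        ∀ y : T₂.V, ∃ x : T₁.V, DupWinsSched T₁ T₂ (n :: rest) side ((x, y) :: ps)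
termination_by sched _ _ => (sched.length, sched.sum)
decreasing_by
  all_goals
    first
      | exact Prod.Lex.left _ _ (Nat.lt_succ_self _)
      | exact Prod.Lex.right _ (by simp [List.sum_cons])

/-- The cost (in switches) for Spoiler of playing on side `side` when his
previous move (if any) was on side `last`. -/
def switchCost (last : Option Bool) (side : Bool) : ℕ :=
  match last with
  | none => 0
  | some b => if b = side then 0 else 1

/-- Duplicator wins the Ehrenfeucht game `EHR` with `rounds` remaining rounds,
`sw` remaining switches allowed to Spoiler, `last` the side on which Spoiler
made his previous move (if any), and `ps` the pairs selected so far.  In each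
round Spoiler picks a side (paying a switch if he changes trees, which he may
do only if he has switches left) and a vertex in that tree, and Duplicator
answers in the other tree. -/
def DupWinsEHRAux (T₁ T₂ : RTree) :
    ℕ → ℕ → Option Bool → List (T₁.V × T₂.V) → Prop
  | 0, _, _, ps => GoodPairs T₁ T₂ ps
  | r + 1, sw, last, ps =>
      ∀ side : Bool, switchCost last side ≤ sw →
        if side then
          ∀ x : T₁.V, ∃ y : T₂.V,
            DupWinsEHRAux T₁ T₂ r (sw - switchCost last side) (some side) ((x, y) :: ps)
        else
          ∀ y : T₂.V, ∃ x : T₁.V,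
            DupWinsEHRAux T₁ T₂ r (sw - switchCost last side) (some side) ((x, y) :: ps)

/-- Duplicator wins the game `EHR[T₁, T₂, s, r]`: `r` rounds, Spoiler may start
on either tree and make at most `s` switches. -/
def DupWinsEHR (T₁ T₂ : RTree) (s r : ℕ) : Prop :=
  DupWinsEHRAux T₁ T₂ r s none [(T₁.root, T₂.root)]

/-! ## The trees `T₁^{(s,k,m)}` and `T₂^{(s,k,m)}` -/

/-- The one-vertex rooted tree. -/
def single : RTree where
  V := PUnit
  root := PUnit.unit
  parent := fun _ => none

/-- Hang the trees `f 0, …, f (n-1)` from a new root: the root of each `f i`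
becomes a child of the new root. -/
def hang (n : ℕ) (f : Fin n → RTree) : RTree where
  V := Unit ⊕ (Σ i : Fin n, (f i).V)
  root := Sum.inl ()
  parent := fun x =>
    match x with
    | Sum.inl _ => none
    | Sum.inr ⟨i, w⟩ =>
      match (f i).parent w with
      | none => some (Sum.inl ())
      | some w' => some (Sum.inr ⟨i, w'⟩)

/-- The pair of trees `(T₁^{(s,k,m)}, T₂^{(s,k,m)})`, indexed by `s` (the
parameter `k` plays no role in the construction).  Conventions for `s = 0`:
`T₁^{(0)}` is a single vertex and `T₂^{(0)}` is a star of `m` childless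
children.  For `s ≥ 1`: in `T₁^{(s+1)}` the root has `m+1` children, from each
of which hangs a copy of `T₂^{(s)}`; in `T₂^{(s+1)}` the root has `m+1`
children, from `m` of which hangs a copy of `T₂^{(s)}` and from the remaining
one hangs a copy of `T₁^{(s)}`. -/
def TreePair (m : ℕ) : ℕ → RTree × RTree
  | 0 => (single, hang m fun _ => single)
  | s + 1 =>
      (hang (m + 1) fun _ => (TreePair m s).2,
       hang (m + 1) fun i => if i.1 = m then (TreePair m s).1 else (TreePair m s).2)

/-- The tree `T₁^{(s,k,m)}`. -/
def Tree1 (s k m : ℕ) : RTree := (TreePair m s).1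

/-- The tree `T₂^{(s,k,m)}`. -/
def Tree2 (s k m : ℕ) : RTree := (TreePair m s).2

/-!
At level `s` Duplicator has a back-and-forth system on `(T₁^{(s)}, T₂^{(s)})` containing the
root position whenever `r ≤ m` rounds remain and Spoiler has at most `s` switches left, one more
switch being charged unless his last move was in `T₁`.

For level `s + 1` she matches branches below the roots: a branch opened by Spoiler is paired with
a fresh branch of the other tree, and never with the exceptional copy of `T₁^{(s)}` in
`T₂^{(s+1)}` when Spoiler opens it in `T₁^{(s+1)}`; at most `r ≤ m` branches are ever opened, so
fresh branches exist. Two matched copies of `T₂^{(s)}` are played by the identity. The exceptional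
branch is opened only by a move of Spoiler in `T₂^{(s+1)}`, after which `T₂^{(s)}` against
`T₁^{(s)}` is the level-`s` game with the trees exchanged and Spoiler in its first tree, so he has
at most `s` switches left there. Within a matched pair of branches, Spoiler's moves elsewhere are
simulated by moves at the root of the branch.
-/

def RTree.IsRooted (T : RTree) : Prop :=
  ∀ v, T.parent v = none ↔ v = T.root

theorem RTree.isRooted_single : single.IsRooted := fun _ => iff_of_true rfl rfl

def effSwitches (sw : ℕ) : Option Bool → ℕ
  | some true => sw
  | _ => sw + 1

theorem effSwitches_move {sw t : ℕ} {l : Option Bool} {side : Bool} (h : effSwitches sw l ≤ t)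
    (hc : switchCost l side ≤ sw) : effSwitches (sw - switchCost l side) (some side) ≤ t := by
  rcases l with _ | _ | _ <;> cases side <;> grind [effSwitches, switchCost]

theorem sub_switchCost_false_le {sw s : ℕ} {l : Option Bool} (h : effSwitches sw l ≤ s + 1)
    (hc : switchCost l false ≤ sw) : sw - switchCost l false ≤ s := by
  rcases l with _ | _ | _ <;> grind [effSwitches, switchCost]

theorem effSwitches_eq_zero_iff {sw : ℕ} {l : Option Bool} :
    effSwitches sw l = 0 ↔ l = some true ∧ sw = 0 := by
  rcases l with _ | _ | _ <;> simp [effSwitches]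

theorem switchCost_map_not (l : Option Bool) (side : Bool) :
    switchCost (l.map not) side = switchCost l (!side) := by
  rcases l with _ | _ | _ <;> cases side <;> rfl

def PairsAgree (S T : RTree) (p q : S.V × T.V) : Prop :=
  (S.parent p.1 = some q.1 ↔ T.parent p.2 = some q.2) ∧ (p.1 = q.1 ↔ p.2 = q.2)

theorem goodPairs_map_swap {S T : RTree} {ps : List (T.V × S.V)}
    (h : GoodPairs S T (ps.map Prod.swap)) : GoodPairs T S ps := fun p hp q hq =>
  have h := h p.swap (List.mem_map_of_mem hp) q.swap (List.mem_map_of_mem hq)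
  ⟨h.1.symm, h.2.symm⟩

/-- `J r sw l ps`: the position `ps` is safe for Duplicator when `r` rounds and `sw` switches
are left to Spoiler, whose last move was on side `l`. -/
structure BackForth (S T : RTree) where
  J : ℕ → ℕ → Option Bool → List (S.V × T.V) → Prop
  good {r sw l ps} : J r sw l ps → GoodPairs S T ps
  forth {r sw l ps} : J (r + 1) sw l ps → switchCost l true ≤ sw →
    ∀ x, ∃ y, J r (sw - switchCost l true) (some true) ((x, y) :: ps)
  back {r sw l ps} : J (r + 1) sw l ps → switchCost l false ≤ sw →
    ∀ y, ∃ x, J r (sw - switchCost l false) (some false) ((x, y) :: ps)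

namespace BackForth

variable {S T : RTree}

theorem wins (F : BackForth S T) :
    ∀ {r sw l ps}, F.J r sw l ps → DupWinsEHRAux S T r sw l ps
  | 0, _, _, _, h => F.good h
  | _ + 1, _, _, _, h => by
    rintro (_ | _) hc
    · intro y
      obtain ⟨x, hx⟩ := F.back h hc y
      exact ⟨x, F.wins hx⟩
    · intro x
      obtain ⟨y, hy⟩ := F.forth h hc x
      exact ⟨y, F.wins hy⟩

theorem advance (F : BackForth S T) {r sw l ps} {side : Bool} (h : F.J (r + 1) sw l ps)
    (hc : switchCost l side ≤ sw) :
    ∃ ps', ps ⊆ ps' ∧ F.J r (sw - switchCost l side) (some side) ps' := by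
  cases side
  · obtain ⟨x, hx⟩ := F.back h hc T.root
    exact ⟨_, List.subset_cons_self _ _, hx⟩
  · obtain ⟨y, hy⟩ := F.forth h hc S.root
    exact ⟨_, List.subset_cons_self _ _, hy⟩

protected def refl (S : RTree) : BackForth S S where
  J _ _ _ ps := ∀ p ∈ ps, p.1 = p.2
  good h p hp q hq := by rw [h p hp, h q hq]; exact ⟨Iff.rfl, Iff.rfl⟩
  forth _ _ x := ⟨x, List.forall_mem_cons.2 ⟨rfl, ‹_›⟩⟩
  back _ _ y := ⟨y, List.forall_mem_cons.2 ⟨rfl, ‹_›⟩⟩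

protected def swap (F : BackForth S T) : BackForth T S where
  J r sw l ps := F.J r sw (l.map not) (ps.map Prod.swap)
  good h := goodPairs_map_swap (F.good h)
  forth {_ _ l _} h hc x := by
    rw [← Bool.not_false, ← switchCost_map_not] at hc ⊢
    exact F.back h hc x
  back {_ _ l _} h hc y := by
    rw [← Bool.not_true, ← switchCost_map_not] at hc ⊢
    exact F.forth h hc y

end BackForth

def HasBackForth (S T : RTree) (P : ℕ → ℕ → Option Bool → Prop) : Prop :=
  ∃ F : BackForth S T, ∀ r sw l, P r sw l → F.J r sw l [(S.root, T.root)]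

namespace HasBackForth

variable {S T : RTree} {P P' : ℕ → ℕ → Option Bool → Prop}

theorem mono (h : HasBackForth S T P) (hP : ∀ r sw l, P' r sw l → P r sw l) :
    HasBackForth S T P' :=
  let ⟨F, hF⟩ := h
  ⟨F, fun r sw l h => hF r sw l (hP r sw l h)⟩

theorem swap (h : HasBackForth S T P) : HasBackForth T S fun r sw l => P r sw (l.map not) :=
  let ⟨F, hF⟩ := h
  ⟨F.swap, fun r sw l h => hF r sw (l.map not) h⟩

theorem refl (S : RTree) : HasBackForth S S fun _ _ _ => True :=
  ⟨.refl S, fun _ _ _ _ p hp => by rw [List.mem_singleton.1 hp]⟩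

/-- With no switch left and Spoiler in the one-vertex tree, only the roots can be played. -/
theorem single_left {T : RTree} (hT : T.IsRooted) :
    HasBackForth single T fun _ sw l => effSwitches sw l = 0 := by
  refine ⟨⟨fun _ sw l ps => effSwitches sw l = 0 ∧ ∀ p ∈ ps, p = (single.root, T.root),
    ?_, ?_, ?_⟩, fun _ _ _ h => ⟨h, fun p hp => List.mem_singleton.1 hp⟩⟩
  · rintro _ _ _ _ ⟨-, h⟩ p hp q hq
    rw [h p hp, h q hq, (hT T.root).2 rfl]
    exact ⟨iff_of_false nofun nofun, iff_of_true rfl rfl⟩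
  · rintro _ _ _ _ ⟨hsw, h⟩ - ⟨⟩
    obtain ⟨rfl, rfl⟩ := effSwitches_eq_zero_iff.1 hsw
    exact ⟨T.root, rfl, List.forall_mem_cons.2 ⟨rfl, h⟩⟩
  · rintro _ _ _ _ ⟨hsw, -⟩ hc
    obtain ⟨rfl, rfl⟩ := effSwitches_eq_zero_iff.1 hsw
    exact absurd hc (by decide)

end HasBackForth

section Hang

variable {n : ℕ} {f g : Fin n → RTree}

theorem RTree.isRooted_hang : (hang n f).IsRooted := by
  rintro (_ | ⟨i, v⟩)
  · exact iff_of_true rfl rfl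
  · cases h : (f i).parent v <;> simp [hang, h]

theorem hang_parent_inr_eq_root {i : Fin n} {v : (f i).V} :
    (hang n f).parent (.inr ⟨i, v⟩) = some (hang n f).root ↔ (f i).parent v = none := by
  cases h : (f i).parent v <;> simp [hang, h]

theorem hang_parent_inr_eq_inr {i : Fin n} {v v' : (f i).V} :
    (hang n f).parent (.inr ⟨i, v⟩) = some (.inr ⟨i, v'⟩) ↔ (f i).parent v = some v' := by
  cases h : (f i).parent v <;> simp [hang, h]

theorem hang_parent_inr_ne_inr {i i' : Fin n} (hi : i ≠ i') (v : (f i).V) (v' : (f i').V) :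
    (hang n f).parent (.inr ⟨i, v⟩) ≠ some (.inr ⟨i', v'⟩) := by
  cases h : (f i).parent v <;> simp [hang, h, hi]

theorem hang_inr_eq_inr_iff {i : Fin n} {v v' : (f i).V} :
    (.inr ⟨i, v⟩ : (hang n f).V) = .inr ⟨i, v'⟩ ↔ v = v' :=
  ⟨fun h => eq_of_heq (Sigma.mk.inj_iff.1 (Sum.inr_injective h)).2, fun h => h ▸ rfl⟩

theorem hang_inr_ne_inr {i i' : Fin n} (hi : i ≠ i') (v : (f i).V) (v' : (f i').V) :
    (.inr ⟨i, v⟩ : (hang n f).V) ≠ .inr ⟨i', v'⟩ :=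
  fun h => hi (congrArg Sigma.fst (Sum.inr_injective h))

def hangPair (a : Fin n × Fin n) (q : (f a.1).V × (g a.2).V) : (hang n f).V × (hang n g).V :=
  (.inr ⟨a.1, q.1⟩, .inr ⟨a.2, q.2⟩)

theorem pairsAgree_root_hangPair {a : Fin n × Fin n} {q : (f a.1).V × (g a.2).V} :
    PairsAgree (hang n f) (hang n g) ((hang n f).root, (hang n g).root) (hangPair a q) := by
  simp [PairsAgree, hangPair, hang]

theorem pairsAgree_hangPair_root_iff {a : Fin n × Fin n} {q : (f a.1).V × (g a.2).V} :
    PairsAgree (hang n f) (hang n g) (hangPair a q) ((hang n f).root, (hang n g).root) ↔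
      ((f a.1).parent q.1 = none ↔ (g a.2).parent q.2 = none) :=
  (and_iff_left (iff_of_false nofun nofun)).trans
    (iff_congr hang_parent_inr_eq_root hang_parent_inr_eq_root)

theorem pairsAgree_hangPair_iff {a : Fin n × Fin n} {q q' : (f a.1).V × (g a.2).V} :
    PairsAgree (hang n f) (hang n g) (hangPair a q) (hangPair a q') ↔
      PairsAgree (f a.1) (g a.2) q q' :=
  and_congr (iff_congr hang_parent_inr_eq_inr hang_parent_inr_eq_inr)
    (iff_congr hang_inr_eq_inr_iff hang_inr_eq_inr_iff)

theorem pairsAgree_hangPair_of_ne {a b : Fin n × Fin n} (h₁ : a.1 ≠ b.1) (h₂ : a.2 ≠ b.2)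
    (q : (f a.1).V × (g a.2).V) (q' : (f b.1).V × (g b.2).V) :
    PairsAgree (hang n f) (hang n g) (hangPair a q) (hangPair b q') :=
  ⟨iff_of_false (hang_parent_inr_ne_inr h₁ _ _) (hang_parent_inr_ne_inr h₂ _ _),
    iff_of_false (hang_inr_ne_inr h₁ _ _) (hang_inr_ne_inr h₂ _ _)⟩

def IsMatching (M : Finset (Fin n × Fin n)) : Prop :=
  ∀ a ∈ M, ∀ b ∈ M, a.1 = b.1 ↔ a.2 = b.2

theorem IsMatching.insert {M : Finset (Fin n × Fin n)} {a : Fin n × Fin n} (hM : IsMatching M)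
    (h₁ : ∀ b ∈ M, b.1 ≠ a.1) (h₂ : ∀ b ∈ M, b.2 ≠ a.2) : IsMatching (insert a M) := by
  intro b hb c hc
  rcases Finset.mem_insert.1 hb with rfl | hbM <;> rcases Finset.mem_insert.1 hc with rfl | hcM
  · exact iff_of_true rfl rfl
  · exact iff_of_false (h₁ c hcM).symm (h₂ c hcM).symm
  · exact iff_of_false (h₁ b hbM) (h₂ b hbM)
  · exact hM b hbM c hcM

/-- Positions on `hang n f`, `hang n g` in which the pairs of branches in `M` are matched and
Duplicator plays in each of them according to `Φ a`, from a position `Q a` that may contain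
more pairs than were actually played there. -/
structure HangInv (Φ : ∀ a : Fin n × Fin n, BackForth (f a.1) (g a.2))
    (M : Finset (Fin n × Fin n)) (Q : ∀ a : Fin n × Fin n, List ((f a.1).V × (g a.2).V))
    (r sw : ℕ) (l : Option Bool) (ps : List ((hang n f).V × (hang n g).V)) : Prop where
  matching : IsMatching M
  card_add_lt : M.card + r < n
  cover : ∀ p ∈ ps, p = ((hang n f).root, (hang n g).root) ∨ ∃ a ∈ M, ∃ q ∈ Q a, p = hangPair a q
  root_mem : ∀ a ∈ M, ((f a.1).root, (g a.2).root) ∈ Q a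
  branch : ∀ a ∈ M, (Φ a).J r sw l (Q a)

namespace HangInv

variable {Φ : ∀ a : Fin n × Fin n, BackForth (f a.1) (g a.2)} {M : Finset (Fin n × Fin n)}
  {Q : ∀ a : Fin n × Fin n, List ((f a.1).V × (g a.2).V)} {r sw : ℕ} {l : Option Bool}
  {ps : List ((hang n f).V × (hang n g).V)} {side : Bool}

theorem singleton_root (Φ : ∀ a : Fin n × Fin n, BackForth (f a.1) (g a.2)) (hr : r < n) :
    HangInv Φ ∅ (fun _ => []) r sw l [((hang n f).root, (hang n g).root)] where
  matching := nofun
  card_add_lt := by simpa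
  cover _ hp := .inl (List.mem_singleton.1 hp)
  root_mem := nofun
  branch := nofun

theorem good (hf : ∀ i, (f i).IsRooted) (hg : ∀ j, (g j).IsRooted) (h : HangInv Φ M Q r sw l ps) :
    GoodPairs (hang n f) (hang n g) ps := by
  intro p hp p' hp'
  rcases h.cover p hp with rfl | ⟨a, ha, q, hq, rfl⟩ <;>
    rcases h.cover p' hp' with rfl | ⟨b, hb, q', hq', rfl⟩
  · exact ⟨iff_of_false nofun nofun, iff_of_true rfl rfl⟩
  · exact pairsAgree_root_hangPair
  · refine pairsAgree_hangPair_root_iff.2 ?_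
    rw [hf a.1 q.1, hg a.2 q.2]
    exact ((Φ a).good (h.branch a ha) q hq _ (h.root_mem a ha)).2
  · by_cases hab : a.1 = b.1
    · obtain rfl : a = b := Prod.ext hab ((h.matching a ha b hb).1 hab)
      exact pairsAgree_hangPair_iff.2 ((Φ a).good (h.branch a ha) q hq q' hq')
    · exact pairsAgree_hangPair_of_ne hab (mt (h.matching a ha b hb).2 hab) q q'

theorem exists_advance (h : HangInv Φ M Q (r + 1) sw l ps) (hc : switchCost l side ≤ sw) :
    ∃ Q' : ∀ a : Fin n × Fin n, List ((f a.1).V × (g a.2).V), ∀ a ∈ M,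
      Q a ⊆ Q' a ∧ (Φ a).J r (sw - switchCost l side) (some side) (Q' a) := by
  have : ∀ a, ∃ qs, a ∈ M → Q a ⊆ qs ∧ (Φ a).J r (sw - switchCost l side) (some side) qs := by
    intro a
    by_cases ha : a ∈ M
    · obtain ⟨qs, hsub, hJ⟩ := (Φ a).advance (h.branch a ha) hc
      exact ⟨qs, fun _ => ⟨hsub, hJ⟩⟩
    · exact ⟨[], fun h => absurd h ha⟩
  choose Q' hQ' using this
  exact ⟨Q', hQ'⟩

theorem cons_root (h : HangInv Φ M Q (r + 1) sw l ps) (hc : switchCost l side ≤ sw) :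
    ∃ Q', HangInv Φ M Q' r (sw - switchCost l side) (some side)
      (((hang n f).root, (hang n g).root) :: ps) := by
  obtain ⟨Q', hQ'⟩ := h.exists_advance hc
  refine ⟨Q', h.matching, by have := h.card_add_lt; omega, ?_,
    fun a ha => (hQ' a ha).1 (h.root_mem a ha), fun a ha => (hQ' a ha).2⟩
  rintro p (_ | ⟨_, hp⟩)
  · exact .inl rfl
  · rcases h.cover p hp with hp | ⟨a, ha, q, hq, rfl⟩
    · exact .inl hp
    · exact .inr ⟨a, ha, q, (hQ' a ha).1 hq, rfl⟩

theorem cons (h : HangInv Φ M Q (r + 1) sw l ps) (hc : switchCost l side ≤ sw)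
    {a : Fin n × Fin n} (hM : IsMatching (insert a M)) {qs : List ((f a.1).V × (g a.2).V)}
    (hsub : a ∈ M → Q a ⊆ qs) (hroot : ((f a.1).root, (g a.2).root) ∈ qs)
    {q : (f a.1).V × (g a.2).V} (hJ : (Φ a).J r (sw - switchCost l side) (some side) (q :: qs)) :
    ∃ Q', HangInv Φ (insert a M) Q' r (sw - switchCost l side) (some side)
      (hangPair a q :: ps) := by
  obtain ⟨Q', hQ'⟩ := h.exists_advance hc
  have hgrow : ∀ b ∈ M, Q b ⊆ Function.update Q' a (q :: qs) b := by
    intro b hb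
    by_cases hba : b = a
    · subst hba
      rw [Function.update_self]
      exact List.Subset.trans (hsub hb) (List.subset_cons_self _ _)
    · rw [Function.update_of_ne hba]
      exact (hQ' b hb).1
  refine ⟨Function.update Q' a (q :: qs), hM, ?_, ?_, ?_, ?_⟩
  · have := h.card_add_lt
    have := Finset.card_insert_le a M
    omega
  · rintro p (_ | ⟨_, hp⟩)
    · exact .inr ⟨a, Finset.mem_insert_self a M, q, by simp, rfl⟩
    · rcases h.cover p hp with hp | ⟨b, hb, q', hq', rfl⟩
      · exact .inl hp
      · exact .inr ⟨b, Finset.mem_insert_of_mem hb, q', hgrow b hb hq', rfl⟩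
  · intro b hb
    rcases Finset.mem_insert.1 hb with rfl | hb
    · simpa using List.mem_cons_of_mem _ hroot
    · exact hgrow b hb (h.root_mem b hb)
  · intro b hb
    by_cases hba : b = a
    · subst hba
      simpa using hJ
    · rw [Function.update_of_ne hba]
      exact (hQ' b (Finset.mem_of_mem_insert_of_ne hb hba)).2

end HangInv

end Hang

theorem exists_ne_forall_snd_ne {n : ℕ} (M : Finset (Fin n × Fin n)) (j₀ : Fin n)
    (h : M.card + 1 < n) : ∃ j, j ≠ j₀ ∧ ∀ b ∈ M, b.2 ≠ j := by
  have hcard : (insert j₀ (M.image Prod.snd)).card < (Finset.univ : Finset (Fin n)).card := by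
    have := Finset.card_insert_le j₀ (M.image Prod.snd)
    have := M.card_image_le (f := Prod.snd)
    simp only [Finset.card_univ, Fintype.card_fin]
    omega
  obtain ⟨j, -, hj⟩ := Finset.exists_mem_notMem_of_card_lt_card hcard
  rw [Finset.mem_insert, not_or] at hj
  exact ⟨j, hj.1, fun b hb hbj => hj.2 (Finset.mem_image.2 ⟨b, hb, hbj⟩)⟩

theorem exists_forall_fst_ne {n : ℕ} (M : Finset (Fin n × Fin n)) (h : M.card < n) :
    ∃ i, ∀ b ∈ M, b.1 ≠ i := by
  have hcard : (M.image Prod.fst).card < (Finset.univ : Finset (Fin n)).card := by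
    simpa using (M.card_image_le (f := Prod.fst)).trans_lt h
  obtain ⟨i, -, hi⟩ := Finset.exists_mem_notMem_of_card_lt_card hcard
  exact ⟨i, fun b hb hbi => hi (Finset.mem_image.2 ⟨b, hb, hbi⟩)⟩

section Step

variable {m s : ℕ} {B : RTree} {g : Fin (m + 1) → RTree} {Ψ : ∀ j, BackForth B (g j)}
  {j₀ : Fin (m + 1)} {M : Finset (Fin (m + 1) × Fin (m + 1))}
  {Q : ∀ a : Fin (m + 1) × Fin (m + 1), List (B.V × (g a.2).V)} {r sw : ℕ} {l : Option Bool}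
  {ps : List ((hang (m + 1) fun _ => B).V × (hang (m + 1) g).V)}

theorem HangInv.exists_forth (hopen : ∀ j ≠ j₀, ∀ r sw l, (Ψ j).J r sw l [(B.root, (g j).root)])
    (h : HangInv (fun a => Ψ a.2) M Q (r + 1) sw l ps) (hc : switchCost l true ≤ sw)
    (x : (hang (m + 1) fun _ => B).V) :
    ∃ y M' Q', HangInv (fun a => Ψ a.2) M' Q' r (sw - switchCost l true) (some true)
      ((x, y) :: ps) := by
  rcases x with ⟨⟩ | ⟨i, v⟩
  · obtain ⟨Q', h'⟩ := h.cons_root hc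
    exact ⟨_, M, Q', h'⟩
  by_cases hi : ∃ j, (i, j) ∈ M
  · obtain ⟨j, hij⟩ := hi
    obtain ⟨w, hw⟩ := (Ψ j).forth (h.branch _ hij) hc v
    obtain ⟨Q', h'⟩ := h.cons hc (by rw [Finset.insert_eq_of_mem hij]; exact h.matching)
      (fun _ => List.Subset.refl _) (h.root_mem _ hij) hw
    exact ⟨.inr ⟨j, w⟩, _, Q', h'⟩
  · simp only [not_exists] at hi
    obtain ⟨j, hj₀, hjM⟩ := exists_ne_forall_snd_ne M j₀ (by have := h.card_add_lt; omega)
    obtain ⟨w, hw⟩ := (Ψ j).forth (hopen j hj₀ (r + 1) (sw - switchCost l true) (some true))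
      (Nat.zero_le _) v
    have hM : IsMatching (insert (i, j) M) :=
      h.matching.insert (fun b hb hbi => hi b.2 (by obtain rfl : b.1 = i := hbi; exact hb)) hjM
    obtain ⟨Q', h'⟩ := h.cons (a := (i, j)) hc hM (fun hij => absurd hij (hi j))
      (List.mem_singleton_self _) hw
    exact ⟨.inr ⟨j, w⟩, _, Q', h'⟩

theorem HangInv.exists_back (hopen : ∀ j ≠ j₀, ∀ r sw l, (Ψ j).J r sw l [(B.root, (g j).root)])
    (hopen₀ : ∀ r sw, r ≤ m → sw ≤ s → (Ψ j₀).J r sw (some false) [(B.root, (g j₀).root)])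
    (hsw : effSwitches sw l ≤ s + 1) (h : HangInv (fun a => Ψ a.2) M Q (r + 1) sw l ps)
    (hc : switchCost l false ≤ sw) (y : (hang (m + 1) g).V) :
    ∃ x M' Q', HangInv (fun a => Ψ a.2) M' Q' r (sw - switchCost l false) (some false)
      ((x, y) :: ps) := by
  rcases y with ⟨⟩ | ⟨j, w⟩
  · obtain ⟨Q', h'⟩ := h.cons_root hc
    exact ⟨_, M, Q', h'⟩
  by_cases hj : ∃ i, (i, j) ∈ M
  · obtain ⟨i, hij⟩ := hj
    obtain ⟨v, hv⟩ := (Ψ j).back (h.branch _ hij) hc w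
    obtain ⟨Q', h'⟩ := h.cons hc (by rw [Finset.insert_eq_of_mem hij]; exact h.matching)
      (fun _ => List.Subset.refl _) (h.root_mem _ hij) hv
    exact ⟨.inr ⟨i, v⟩, _, Q', h'⟩
  · simp only [not_exists] at hj
    obtain ⟨i, hiM⟩ := exists_forall_fst_ne M (by have := h.card_add_lt; omega)
    -- The branch is opened in the state after Spoiler's move, where a further move on his side
    -- is free; for the exceptional branch this state leaves him at most `s` switches.
    have hopen' :
        (Ψ j).J (r + 1) (sw - switchCost l false) (some false) [(B.root, (g j).root)] := by
      by_cases hj₀ : j = j₀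
      · subst hj₀
        exact hopen₀ _ _ (by have := h.card_add_lt; omega) (sub_switchCost_false_le hsw hc)
      · exact hopen j hj₀ _ _ _
    obtain ⟨v, hv⟩ := (Ψ j).back hopen' (Nat.zero_le _) w
    have hM : IsMatching (insert (i, j) M) :=
      h.matching.insert hiM (fun b hb hbj => hj b.1 (by obtain rfl : b.2 = j := hbj; exact hb))
    obtain ⟨Q', h'⟩ := h.cons (a := (i, j)) hc hM (fun hij => absurd hij (hj i))
      (List.mem_singleton_self _) hv
    exact ⟨.inr ⟨i, v⟩, _, Q', h'⟩

end Step

theorem HasBackForth.hang {m s : ℕ} {B : RTree} {g : Fin (m + 1) → RTree} (j₀ : Fin (m + 1))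
    (hB : B.IsRooted) (hg : ∀ j, (g j).IsRooted)
    (hother : ∀ j ≠ j₀, HasBackForth B (g j) fun _ _ _ => True)
    (hanom : HasBackForth B (g j₀) fun r sw l => r ≤ m ∧ sw ≤ s ∧ l = some false) :
    HasBackForth (hang (m + 1) fun _ => B) (hang (m + 1) g)
      fun r sw l => r ≤ m ∧ effSwitches sw l ≤ s + 1 := by
  have : ∀ j, ∃ Ψ : BackForth B (g j), ∀ r sw l,
      (j ≠ j₀ ∨ r ≤ m ∧ sw ≤ s ∧ l = some false) → Ψ.J r sw l [(B.root, (g j).root)] := by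
    intro j
    by_cases hj : j = j₀
    · subst hj
      obtain ⟨Ψ, hΨ⟩ := hanom
      exact ⟨Ψ, fun r sw l h => hΨ r sw l (h.resolve_left (not_not.2 rfl))⟩
    · obtain ⟨Ψ, hΨ⟩ := hother j hj
      exact ⟨Ψ, fun r sw l _ => hΨ r sw l trivial⟩
  choose Ψ hΨ using this
  have hopen j (hj : j ≠ j₀) r sw l := hΨ j r sw l (.inl hj)
  have hopen₀ r sw (hr : r ≤ m) (hsw : sw ≤ s) := hΨ j₀ r sw (some false) (.inr ⟨hr, hsw, rfl⟩)
  refine ⟨⟨fun r sw l ps => effSwitches sw l ≤ s + 1 ∧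
      ∃ M Q, HangInv (fun a => Ψ a.2) M Q r sw l ps, ?_, ?_, ?_⟩, ?_⟩
  · rintro _ _ _ _ ⟨-, M, Q, h⟩
    exact h.good (fun _ => hB) hg
  · rintro _ _ _ _ ⟨hsw, M, Q, h⟩ hc x
    obtain ⟨y, M', Q', h'⟩ := h.exists_forth hopen hc x
    exact ⟨y, effSwitches_move hsw hc, M', Q', h'⟩
  · rintro _ _ _ _ ⟨hsw, M, Q, h⟩ hc y
    obtain ⟨x, M', Q', h'⟩ := h.exists_back hopen hopen₀ hsw hc y
    exact ⟨x, effSwitches_move hsw hc, M', Q', h'⟩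
  · rintro r sw l ⟨hr, hsw⟩
    exact ⟨hsw, ∅, fun _ => [], HangInv.singleton_root _ (by omega)⟩

theorem isRooted_treePair (m s : ℕ) : (TreePair m s).1.IsRooted ∧ (TreePair m s).2.IsRooted := by
  cases s
  · exact ⟨RTree.isRooted_single, RTree.isRooted_hang⟩
  · exact ⟨RTree.isRooted_hang, RTree.isRooted_hang⟩

theorem hasBackForth_treePair (m : ℕ) : ∀ s, HasBackForth (TreePair m s).1 (TreePair m s).2
    fun r sw l => r ≤ m ∧ effSwitches sw l ≤ s
  | 0 => (HasBackForth.single_left RTree.isRooted_hang).mono fun _ _ _ h => Nat.le_zero.1 h.2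
  | s + 1 => by
    obtain ⟨hA, hB⟩ := isRooted_treePair m s
    refine HasBackForth.hang (Fin.last m) hB (fun j => ?_) (fun j hj => ?_) ?_
    · split <;> assumption
    · rw [if_neg fun h => hj (Fin.ext (h.trans (Fin.val_last m).symm))]
      exact HasBackForth.refl _
    · rw [if_pos (Fin.val_last m)]
      exact (hasBackForth_treePair m s).swap.mono
        fun _ _ _ ⟨hr, hsw, hl⟩ => ⟨hr, by simpa [hl, effSwitches] using hsw⟩

theorem dup_wins_EHR_trees_general (s k m : ℕ) (hs : 2 ≤ s) (hm : s * k ≤ m) :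
    DupWinsEHR (Tree1 s k m) (Tree2 s k m) (s - 1) k := by
  obtain ⟨F, hF⟩ := hasBackForth_treePair m s
  have hkm : k ≤ m := (Nat.le_mul_of_pos_left k (by omega)).trans hm
  exact F.wins (hF k (s - 1) none ⟨hkm, by simp only [effSwitches]; omega⟩)

/-- For every `s ≥ 2`, positive `k` and `m ≥ s·k`, Duplicator
wins `EHR[T₁^{(s,k,m)}, T₂^{(s,k,m)}, s-1, k]`. -/
theorem dup_wins_EHR_trees (s k m : ℕ) (hs : 2 ≤ s) (hk : 0 < k) (hm : s * k ≤ m) :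
    DupWinsEHR (Tree1 s k m) (Tree2 s k m) (s - 1) k :=
  dup_wins_EHR_trees_general s k m hs hm
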